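/- Let l > 0 and m ∈ ℝ, and set k := √(l² + m²). Define u(t,θ) := ln(2lk) − ln(l² + (m + k cos t)²) and Q(t,θ) := cos θ for (t,θ) ∈ (0,π)×(0,π). Then the pair (u, Q) satisfies the Gowdy equations (G1) and (G2) on (0,π)×(0,π). (These are the Taub solutions in areal gauge.) -/

import Mathlib

/-!
Both unknowns separate: `u` depends only on `t` and `Q = cos θ` only on `θ`. Then (G2) collapses
to `Q'' + cot θ · Q' = 0`, which `cos` satisfies, and (G1) to the ordinary differential equation
`u'' + cot t · u' + e^{2u} sin² t = 2`. Writing `u = log (2lk) - log F` with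
`F = l² + (m + k cos t)²`, this equation, cleared of denominators, is `F` times the identity
`F = 2k cos t (m + k cos t) + k² sin² t`, which is `k² = l² + m²` in disguise.
-/

noncomputable section

open Real Set

/-- Partial derivative with respect to the first (time) variable. -/
def pt (f : ℝ → ℝ → ℝ) (t θ : ℝ) : ℝ := deriv (fun s => f s θ) t

/-- Partial derivative with respect to the second (angle) variable. -/
def pth (f : ℝ → ℝ → ℝ) (t θ : ℝ) : ℝ := deriv (fun x => f t x) θ

/-- The Fuchsian operator `D = t ∂ₜ`. -/
def Dt (f : ℝ → ℝ → ℝ) : ℝ → ℝ → ℝ := fun t θ => t * pt f t θ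

/-- The Gowdy equation (G1) for `(u, Q)`. -/
def GowdyG1 (u Q : ℝ → ℝ → ℝ) (t θ : ℝ) : Prop :=
  -pt (pt u) t θ - Real.cot t * pt u t θ + pth (pth u) t θ + Real.cot θ * pth u t θ
    + Real.exp (2 * u t θ) * (Real.sin t ^ 2 / Real.sin θ ^ 2) *
        ((pt Q t θ) ^ 2 - (pth Q t θ) ^ 2) + 2 = 0

/-- The Gowdy equation (G2) for `(u, Q)`. -/
def GowdyG2 (u Q : ℝ → ℝ → ℝ) (t θ : ℝ) : Prop :=
  -pt (pt Q) t θ - 3 * Real.cot t * pt Q t θ + pth (pth Q) t θ - Real.cot θ * pth Q t θ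
    - 2 * (pt u t θ * pt Q t θ - pth u t θ * pth Q t θ) = 0

section Separated

variable (g : ℝ → ℝ)

theorem pt_fun_fst : pt (fun t _ => g t) = fun t _ => deriv g t := rfl

theorem pth_fun_snd : pth (fun _ θ => g θ) = fun _ θ => deriv g θ := rfl

theorem pt_fun_snd : pt (fun _ θ => g θ) = fun _ _ => 0 := by
  funext t θ
  exact deriv_const t (g θ)

theorem pth_fun_fst : pth (fun t _ => g t) = fun _ _ => 0 := by
  funext t θ
  exact deriv_const θ (g t)

end Separated

theorem gowdyG1_fun_fst_cos_iff (f : ℝ → ℝ) {t θ : ℝ} (hθ : sin θ ≠ 0) :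
    GowdyG1 (fun t _ => f t) (fun _ θ => cos θ) t θ ↔
      deriv (deriv f) t + cot t * deriv f t + exp (2 * f t) * sin t ^ 2 = 2 := by
  have hQ : exp (2 * f t) * (sin t ^ 2 / sin θ ^ 2) * (0 ^ 2 - (-sin θ) ^ 2)
      = -(exp (2 * f t) * sin t ^ 2) := by
    field_simp
    ring
  simp only [GowdyG1, pt_fun_fst, pth_fun_fst, pt_fun_snd, pth_fun_snd, Real.deriv_cos', hQ]
  constructor <;> intro h <;> linarith

theorem gowdyG2_fun_fst_cos (f : ℝ → ℝ) {t θ : ℝ} (hθ : sin θ ≠ 0) :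
    GowdyG2 (fun t _ => f t) (fun _ θ => cos θ) t θ := by
  simp only [GowdyG2, pt_fun_fst, pth_fun_fst, pt_fun_snd, pth_fun_snd, Real.deriv_cos',
    deriv_const', deriv.fun_neg, Real.deriv_sin]
  rw [cot_eq_cos_div_sin, cot_eq_cos_div_sin]
  field_simp
  ring

theorem exp_two_mul_log_sub_log {a b : ℝ} (ha : a ≠ 0) (hb : b ≠ 0) :
    exp (2 * (log a - log b)) = a ^ 2 / b ^ 2 := by
  rw [← log_div ha hb, two_mul, exp_add, exp_log_eq_abs (div_ne_zero ha hb), ← sq, sq_abs,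
    div_pow]

section Taub

variable (l m k : ℝ)

def taubProfile (t : ℝ) : ℝ := log (2 * l * k) - log (l ^ 2 + (m + k * cos t) ^ 2)

variable {l m k}

theorem hasDerivAt_taubDenominator (t : ℝ) :
    HasDerivAt (fun s => l ^ 2 + (m + k * cos s) ^ 2)
      (-(2 * k * sin t * (m + k * cos t))) t :=
  (((((hasDerivAt_cos t).const_mul k).const_add m).fun_pow 2).const_add (l ^ 2)).congr_deriv
    (by ring)

theorem hasDerivAt_taubProfile (hl : l ≠ 0) (t : ℝ) :
    HasDerivAt (taubProfile l m k)
      (2 * k * sin t * (m + k * cos t) / (l ^ 2 + (m + k * cos t) ^ 2)) t :=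
  ((hasDerivAt_taubDenominator t).log (by positivity)).const_sub (log (2 * l * k)) |>.congr_deriv
    (by ring)

theorem hasDerivAt_deriv_taubProfile (hl : l ≠ 0) (t : ℝ) :
    HasDerivAt (deriv (taubProfile l m k))
      (((2 * k * cos t * (m + k * cos t) - 2 * k ^ 2 * sin t ^ 2) * (l ^ 2 + (m + k * cos t) ^ 2)
        + (2 * k * sin t * (m + k * cos t)) ^ 2) / (l ^ 2 + (m + k * cos t) ^ 2) ^ 2) t := by
  rw [funext fun s => (hasDerivAt_taubProfile (m := m) (k := k) hl s).deriv]
  have hN := ((hasDerivAt_sin t).const_mul (2 * k)).fun_mul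
    (((hasDerivAt_cos t).const_mul k).const_add m)
  exact (hN.div (hasDerivAt_taubDenominator t) (by positivity)).congr_deriv (by ring)

theorem taubProfile_ode (hl : l ≠ 0) (hk : k ^ 2 = l ^ 2 + m ^ 2) {t : ℝ} (ht : sin t ≠ 0) :
    deriv (deriv (taubProfile l m k)) t + cot t * deriv (taubProfile l m k) t
      + exp (2 * taubProfile l m k t) * sin t ^ 2 = 2 := by
  have hk0 : k ≠ 0 := by
    rintro rfl
    nlinarith [sq_pos_of_ne_zero hl, sq_nonneg m]
  have hF : l ^ 2 + (m + k * cos t) ^ 2 ≠ 0 := by positivity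
  have hF_eq :
      l ^ 2 + (m + k * cos t) ^ 2 = 2 * k * cos t * (m + k * cos t) + k ^ 2 * sin t ^ 2 := by
    linear_combination -hk - k ^ 2 * sin_sq_add_cos_sq t
  rw [(hasDerivAt_deriv_taubProfile hl t).deriv, (hasDerivAt_taubProfile hl t).deriv,
    taubProfile, exp_two_mul_log_sub_log (by simp [hl, hk0]) hF, cot_eq_cos_div_sin]
  field_simp
  linear_combination -(l ^ 2 + (m + k * cos t) ^ 2) * hF_eq

end Taub

/-- The Taub solutions in areal gauge satisfy the Gowdy equations. -/
theorem taub_solves_gowdy (l m : ℝ) (hl : 0 < l) :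
    ∀ t ∈ Ioo (0 : ℝ) π, ∀ θ ∈ Ioo (0 : ℝ) π,
      GowdyG1
        (fun t _ => Real.log (2 * l * Real.sqrt (l ^ 2 + m ^ 2))
          - Real.log (l ^ 2 + (m + Real.sqrt (l ^ 2 + m ^ 2) * Real.cos t) ^ 2))
        (fun _ θ => Real.cos θ) t θ ∧
      GowdyG2
        (fun t _ => Real.log (2 * l * Real.sqrt (l ^ 2 + m ^ 2))
          - Real.log (l ^ 2 + (m + Real.sqrt (l ^ 2 + m ^ 2) * Real.cos t) ^ 2))
        (fun _ θ => Real.cos θ) t θ := by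
  intro t ht θ hθ
  have sin_ne_zero {x : ℝ} (hx : x ∈ Ioo 0 π) : sin x ≠ 0 :=
    (sin_pos_of_pos_of_lt_pi hx.1 hx.2).ne'
  have hk : √(l ^ 2 + m ^ 2) ^ 2 = l ^ 2 + m ^ 2 := sq_sqrt (by positivity)
  exact ⟨(gowdyG1_fun_fst_cos_iff (taubProfile l m _) (sin_ne_zero hθ)).2
      (taubProfile_ode hl.ne' hk (sin_ne_zero ht)),
    gowdyG2_fun_fst_cos _ (sin_ne_zero hθ)⟩
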